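/- Fix γ ∈ ℝ, γ ≠ 0. Let μ : ℝ³ × ℝ³ → ℝ³ be the group law μ((H,x,y),(H',x',y')) = (H+H', x·e^{γH'/2} + e^{−γH/2}x', y·e^{γH'/2} + e^{−γH/2}y'), and let Π : ℝ³ → M₃(ℝ) assign to p = (H,x,y) the antisymmetric matrix with entries Π₁₂(p) = x, Π₁₃(p) = −y, Π₂₃(p) = sinh(γH)/γ (and Π_{ji} = −Π_{ij}, Π_{ii} = 0). Then for all p, q ∈ ℝ³: Π(μ(p,q)) = D₁μ(p,q) · Π(p) · D₁μ(p,q)ᵀ + D₂μ(p,q) · Π(q) · D₂μ(p,q)ᵀ, where D₁μ(p,q) is the Jacobian matrix at p of the map r ↦ μ(r,q) and D₂μ(p,q) is the Jacobian matrix at q of the map r ↦ μ(p,r). (This is the multiplicativity condition making (ℝ³, μ, Π) a Poisson–Lie group.) -/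

import Mathlib

open Matrix

/-- The three coordinate functions on ℝ³. -/
def coord3 : Fin 3 → (ℝ × ℝ × ℝ → ℝ) := ![fun p => p.1, fun p => p.2.1, fun p => p.2.2]

/-- The standard basis vectors of ℝ³. -/
def basis3 : Fin 3 → ℝ × ℝ × ℝ := ![(1, 0, 0), (0, 1, 0), (0, 0, 1)]

/-- The Jacobian matrix of a map ℝ³ → ℝ³ at a point, in standard coordinates. -/
noncomputable def jacobian (f : ℝ × ℝ × ℝ → ℝ × ℝ × ℝ) (p : ℝ × ℝ × ℝ) :
    Matrix (Fin 3) (Fin 3) ℝ :=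
  Matrix.of fun i j => coord3 i (fderiv ℝ f p (basis3 j))

/-- The group law μ((H,x,y),(H',x',y')) of the Poisson–Lie group of Statement 3. -/
noncomputable def mu3 (γ : ℝ) (p q : ℝ × ℝ × ℝ) : ℝ × ℝ × ℝ :=
  (p.1 + q.1,
    p.2.1 * Real.exp (γ * q.1 / 2) + Real.exp (-(γ * p.1) / 2) * q.2.1,
    p.2.2 * Real.exp (γ * q.1 / 2) + Real.exp (-(γ * p.1) / 2) * q.2.2)

/-- The Poisson bivector matrix: Π₁₂ = x, Π₁₃ = −y, Π₂₃ = sinh(γH)/γ, antisymmetric. -/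
noncomputable def Pi3 (γ : ℝ) (p : ℝ × ℝ × ℝ) : Matrix (Fin 3) (Fin 3) ℝ :=
  !![0, p.2.1, -p.2.2;
     -p.2.1, 0, Real.sinh (γ * p.1) / γ;
     p.2.2, -(Real.sinh (γ * p.1) / γ), 0]


lemma transpose_fin_three' {α : Type*} (a b c d e f g h i : α) :
    !![a, b, c; d, e, f; g, h, i]ᵀ = !![a, d, g; b, e, h; c, f, i] := by
  ext i j; fin_cases i <;> fin_cases j <;> rfl

lemma jac1 (γ : ℝ) (q p : ℝ × ℝ × ℝ) :
    jacobian (fun r => mu3 γ r q) p =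
      !![1, 0, 0;
         -(γ/2) * Real.exp (-(γ*p.1)/2) * q.2.1, Real.exp (γ*q.1/2), 0;
         -(γ/2) * Real.exp (-(γ*p.1)/2) * q.2.2, 0, Real.exp (γ*q.1/2)] := by
  have h0 : HasFDerivAt (fun r : ℝ×ℝ×ℝ => -(γ * r.1) / 2)
      ((-γ/2) • ContinuousLinearMap.fst ℝ ℝ (ℝ×ℝ)) p := by
    have heq : (fun r : ℝ×ℝ×ℝ => -(γ * r.1) / 2) = fun r : ℝ×ℝ×ℝ => -γ/2 * r.1 := by
      funext r; ring
    rw [heq]; exact (hasFDerivAt_fst).const_mul _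
  have hE := h0.exp
  have hfst : HasFDerivAt (Prod.fst : ℝ × ℝ → ℝ) (ContinuousLinearMap.fst ℝ ℝ ℝ) p.2 :=
    hasFDerivAt_fst
  have hsnd : HasFDerivAt (Prod.snd : ℝ × ℝ → ℝ) (ContinuousLinearMap.snd ℝ ℝ ℝ) p.2 :=
    hasFDerivAt_snd
  have hsnd' : HasFDerivAt (Prod.snd : ℝ × ℝ × ℝ → ℝ × ℝ)
      (ContinuousLinearMap.snd ℝ ℝ (ℝ × ℝ)) p := hasFDerivAt_snd
  have hx := (hfst.comp p hsnd').mul_const (Real.exp (γ * q.1 / 2))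
  have hy := (hsnd.comp p hsnd').mul_const (Real.exp (γ * q.1 / 2))
  have hfst3 : HasFDerivAt (Prod.fst : ℝ × ℝ × ℝ → ℝ)
      (ContinuousLinearMap.fst ℝ ℝ (ℝ × ℝ)) p := hasFDerivAt_fst
  have h1 := hfst3.add_const q.1
  have h2 := hx.add (hE.mul_const q.2.1)
  have h3 := hy.add (hE.mul_const q.2.2)
  have h : HasFDerivAt (fun r => mu3 γ r q) _ p := HasFDerivAt.prodMk h1 (HasFDerivAt.prodMk h2 h3)
  ext i j
  rw [jacobian, Matrix.of_apply, h.fderiv]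
  fin_cases i <;> fin_cases j <;>
    simp [coord3, basis3] <;> ring

lemma jac2 (γ : ℝ) (p q : ℝ × ℝ × ℝ) :
    jacobian (fun r => mu3 γ p r) q =
      !![1, 0, 0;
         (γ/2) * p.2.1 * Real.exp (γ*q.1/2), Real.exp (-(γ*p.1)/2), 0;
         (γ/2) * p.2.2 * Real.exp (γ*q.1/2), 0, Real.exp (-(γ*p.1)/2)] := by
  have h0 : HasFDerivAt (fun r : ℝ×ℝ×ℝ => γ * r.1 / 2)
      ((γ/2) • ContinuousLinearMap.fst ℝ ℝ (ℝ×ℝ)) q := by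
    have heq : (fun r : ℝ×ℝ×ℝ => γ * r.1 / 2) = fun r : ℝ×ℝ×ℝ => γ/2 * r.1 := by
      funext r; ring
    rw [heq]; exact (hasFDerivAt_fst).const_mul _
  have hE := h0.exp
  have hfst : HasFDerivAt (Prod.fst : ℝ × ℝ → ℝ) (ContinuousLinearMap.fst ℝ ℝ ℝ) q.2 :=
    hasFDerivAt_fst
  have hsnd : HasFDerivAt (Prod.snd : ℝ × ℝ → ℝ) (ContinuousLinearMap.snd ℝ ℝ ℝ) q.2 :=
    hasFDerivAt_snd
  have hsnd' : HasFDerivAt (Prod.snd : ℝ × ℝ × ℝ → ℝ × ℝ)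
      (ContinuousLinearMap.snd ℝ ℝ (ℝ × ℝ)) q := hasFDerivAt_snd
  have hx := (hfst.comp q hsnd').const_mul (Real.exp (-(γ * p.1) / 2))
  have hy := (hsnd.comp q hsnd').const_mul (Real.exp (-(γ * p.1) / 2))
  have hfst3 : HasFDerivAt (Prod.fst : ℝ × ℝ × ℝ → ℝ)
      (ContinuousLinearMap.fst ℝ ℝ (ℝ × ℝ)) q := hasFDerivAt_fst
  have h1 := hfst3.const_add p.1
  have h2 := (hE.const_mul p.2.1).add hx
  have h3 := (hE.const_mul p.2.2).add hy
  have h : HasFDerivAt (fun r => mu3 γ p r) _ q := HasFDerivAt.prodMk h1 (HasFDerivAt.prodMk h2 h3)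
  ext i j
  rw [jacobian, Matrix.of_apply, h.fderiv]
  fin_cases i <;> fin_cases j <;>
    simp [coord3, basis3] <;> ring

set_option maxHeartbeats 1000000 in
theorem statement6 (γ : ℝ) (hγ : γ ≠ 0) :
    ∀ p q : ℝ × ℝ × ℝ,
      Pi3 γ (mu3 γ p q) =
        jacobian (fun r => mu3 γ r q) p * Pi3 γ p * (jacobian (fun r => mu3 γ r q) p)ᵀ
          + jacobian (fun r => mu3 γ p r) q * Pi3 γ q * (jacobian (fun r => mu3 γ p r) q)ᵀ := by
  intro p q
  rw [jac1, jac2]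
  set a := Real.exp (γ * p.1 / 2) with ha_def
  set b := Real.exp (γ * q.1 / 2) with hb_def
  have ha : a ≠ 0 := Real.exp_ne_zero _
  have hb : b ≠ 0 := Real.exp_ne_zero _
  have e1 : Real.exp (γ * p.1) = a * a := by
    rw [ha_def, ← Real.exp_add]; congr 1; ring
  have e2 : Real.exp (-(γ * p.1)) = (a * a)⁻¹ := by rw [Real.exp_neg, e1]
  have e3 : Real.exp (-(γ * p.1) / 2) = a⁻¹ := by
    rw [neg_div, Real.exp_neg, ha_def]
  have e4 : Real.exp (γ * q.1) = b * b := by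
    rw [hb_def, ← Real.exp_add]; congr 1; ring
  have e5 : Real.exp (-(γ * q.1)) = (b * b)⁻¹ := by rw [Real.exp_neg, e4]
  have e6 : Real.exp (γ * (p.1 + q.1)) = a * b * (a * b) := by
    rw [show γ * (p.1 + q.1) = γ * p.1 / 2 + γ * q.1 / 2 + (γ * p.1 / 2 + γ * q.1 / 2) by ring,
      Real.exp_add, Real.exp_add]
  have e7 : Real.exp (-(γ * (p.1 + q.1))) = (a * b * (a * b))⁻¹ := by
    rw [Real.exp_neg, e6]
  rw [Pi3, Pi3, Pi3, mu3, transpose_fin_three', transpose_fin_three',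
    Matrix.mul_fin_three, Matrix.mul_fin_three, Matrix.mul_fin_three, Matrix.mul_fin_three]
  ext i j
  fin_cases i <;> fin_cases j <;>
    (try simp [Matrix.add_apply, Real.sinh_eq, e1, e2, e3, e4, e5, e6, e7]) <;>
    (try field_simp) <;> (try ring)
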